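/- arXiv:1910.06877 — 4 statements merged into one kernel-verified Lean document; each statement's English description precedes it below -/
import Mathlib

section
/- Let i be a nonzero integer and T a finitely generated abelian group. Then the additive endomorphism of T ⊗_ℤ K₀ given by x ↦ pⁱ·(1⊗σ)(x) − x is bijective. -/
open TensorProduct

/-- `K₀`: the fraction field of the ring of `p`-typical Witt vectors of the finite
field `𝔽_q` with `q = p^f` elements. -/
abbrev K0 (p f : ℕ) [Fact p.Prime] : Type :=
  FractionRing (WittVector p (GaloisField p f))

/-- `ℚ_p`, realized as the fraction field of `W(𝔽_p)`. -/
abbrev Qp (p : ℕ) [Fact p.Prime] : Type :=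
  FractionRing (WittVector p (ZMod p))

/-- The Frobenius `σ` of `K₀`, induced by the Witt vector Frobenius of `W(𝔽_q)`. -/
noncomputable def sigma (p f : ℕ) [Fact p.Prime] : K0 p f ≃+* K0 p f :=
  WittVector.FractionRing.frobenius p (GaloisField p f)

/-- The embedding `ℚ_p → K₀` induced by `W(𝔽_p) → W(𝔽_q)`. -/
noncomputable def iota (p f : ℕ) [Fact p.Prime] : Qp p →+* K0 p f :=
  IsFractionRing.lift
    (g := (algebraMap (WittVector p (GaloisField p f)) (K0 p f)).comp
      (WittVector.map (algebraMap (ZMod p) (GaloisField p f))))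
    (by
      rw [RingHom.coe_comp]
      exact Function.Injective.comp (IsFractionRing.injective _ _)
        (WittVector.map_injective _ (RingHom.injective _)))

/-- `σ` as a `ℤ`-linear endomorphism of `K₀`. -/
noncomputable def sigmaLin (p f : ℕ) [Fact p.Prime] : K0 p f →ₗ[ℤ] K0 p f :=
  AddMonoidHom.toIntLinearMap (sigma p f).toRingHom.toAddMonoidHom

/-- `ι : ℚ_p → K₀` as a `ℤ`-linear map. -/
noncomputable def iotaLin (p f : ℕ) [Fact p.Prime] : Qp p →ₗ[ℤ] K0 p f :=
  AddMonoidHom.toIntLinearMap (iota p f).toAddMonoidHom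

/-- The `ℤ`-linear endomorphism `a ↦ pⁱ·σ(a)` of `K₀` (with `pⁱ ∈ K₀` the `zpow`). -/
noncomputable def twist (p f : ℕ) [Fact p.Prime] (i : ℤ) : K0 p f →ₗ[ℤ] K0 p f :=
  ((p : K0 p f) ^ i) • sigmaLin p f

/-!
Since `σ` fixes `p`, the operator `A = pⁱσ` satisfies `A^f = p^{if}·σ^f`, and `σ^f = 1`
because `σ` lifts the Frobenius of `𝔽_q`. Hence `A^f - 1` is multiplication by the nonzero
scalar `p^{if} - 1` (as `p` is not a unit in `W(𝔽_q)`), and the geometric series factorization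
`A^f - 1 = (A - 1)(1 + A + ⋯ + A^{f-1})` makes `A - 1` invertible on `K₀`, hence on `T ⊗ K₀`.
-/

theorem isUnit_sub_one_of_isUnit_pow_sub_one {R : Type*} [Ring R] {a : R} {n : ℕ}
    (h : IsUnit (a ^ n - 1)) : IsUnit (a - 1) := by
  have hcomm : Commute (a - 1) (∑ i ∈ Finset.range n, a ^ i) :=
    (Commute.sum_right _ _ _ fun i _ => (Commute.refl a).pow_right i).sub_left
      (Commute.one_left _)
  rw [← mul_geom_sum] at h
  exact (hcomm.isUnit_mul_iff.mp h).1

namespace WittVector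

variable (p : ℕ) [Fact p.Prime] {k : Type*}

theorem not_isUnit_p [CommRing k] [CharP k p] [Nontrivial k] : ¬IsUnit (p : WittVector p k) :=
  fun h => by simpa using h.map (constantCoeff (p := p) (R := k))

theorem FractionRing.p_zpow_ne_one [CommRing k] [IsDomain k] [CharP k p] {m : ℤ} (hm : m ≠ 0) :
    (p : FractionRing (WittVector p k)) ^ m ≠ 1 := by
  intro h
  have hpow : (p : FractionRing (WittVector p k)) ^ m.natAbs = 1 := by
    rcases Int.natAbs_eq m with hm' | hm' <;> rw [hm'] at h
    · exact_mod_cast h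
    · rwa [zpow_neg, inv_eq_one, zpow_natCast] at h
  have hW : (p : WittVector p k) ^ m.natAbs = 1 :=
    IsFractionRing.injective (WittVector p k) (FractionRing (WittVector p k)) (by simpa using hpow)
  exact not_isUnit_p p (IsUnit.of_pow_eq_one hW (Int.natAbs_ne_zero.mpr hm))

variable [Field k] [Finite k] [CharP k p]

theorem iterate_frobenius_eq_id {n : ℕ} (hcard : Nat.card k = p ^ n) :
    (frobenius : WittVector p k → WittVector p k)^[n] = id := by
  have := Fintype.ofFinite k
  funext x
  ext i
  rw [iterate_frobenius_coeff, ← hcard, Nat.card_eq_fintype_card, FiniteField.pow_card, id]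

theorem FractionRing.frobenius_pow_eq_one {n : ℕ} (hcard : Nat.card k = p ^ n) :
    FractionRing.frobenius p k ^ n = 1 := by
  have hsemi : Function.Semiconj (algebraMap (WittVector p k) (FractionRing (WittVector p k)))
      WittVector.frobenius (FractionRing.frobenius p k) := fun w =>
    (IsFractionRing.ringEquivOfRingEquiv_algebraMap (frobeniusEquiv p k) w).symm
  refine RingEquiv.toRingHom_injective <|
    IsLocalization.ringHom_ext (nonZeroDivisors (WittVector p k)) <| RingHom.ext fun w => ?_
  simp [RingAut.coe_pow, ← (hsemi.iterate_right n) w, iterate_frobenius_eq_id p hcard]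

end WittVector

section Twist

variable (p f : ℕ) [Fact p.Prime]

theorem sigmaLin_pow_eq_one (hf : f ≠ 0) : sigmaLin p f ^ f = 1 := by
  have hσ : sigma p f ^ f = 1 :=
    WittVector.FractionRing.frobenius_pow_eq_one p (GaloisField.card p f hf)
  ext x
  rw [Module.End.coe_pow]
  exact (congrFun (RingAut.coe_pow (sigma p f) f) x).symm.trans congr($hσ x)

theorem commute_toModuleEnd_sigmaLin {c : K0 p f} (hc : sigma p f c = c) :
    Commute (Module.toModuleEnd ℤ (S := K0 p f) (K0 p f) c) (sigmaLin p f) := by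
  ext x
  change c * sigma p f x = sigma p f (c * x)
  rw [map_mul, hc]

theorem twist_eq_toModuleEnd_mul (i : ℤ) :
    twist p f i =
      Module.toModuleEnd ℤ (S := K0 p f) (K0 p f) ((p : K0 p f) ^ i) * sigmaLin p f :=
  rfl

theorem twist_pow_eq (hf : f ≠ 0) (i : ℤ) :
    twist p f i ^ f = Module.toModuleEnd ℤ (S := K0 p f) (K0 p f) ((p : K0 p f) ^ (i * f)) := by
  have hfix : sigma p f ((p : K0 p f) ^ i) = (p : K0 p f) ^ i := by
    rw [map_zpow₀, map_natCast]
  rw [twist_eq_toModuleEnd_mul, (commute_toModuleEnd_sigmaLin p f hfix).mul_pow,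
    sigmaLin_pow_eq_one p f hf, mul_one, ← map_pow, zpow_mul, zpow_natCast]

theorem isUnit_twist_sub_one (hf : f ≠ 0) {i : ℤ} (hi : i ≠ 0) : IsUnit (twist p f i - 1) := by
  refine isUnit_sub_one_of_isUnit_pow_sub_one (n := f) ?_
  rw [twist_pow_eq p f hf, ← map_one (Module.toModuleEnd ℤ (S := K0 p f) (K0 p f)), ← map_sub]
  refine (Ne.isUnit ?_).map _
  exact sub_ne_zero.mpr
    (WittVector.FractionRing.p_zpow_ne_one p (mul_ne_zero hi (Int.natCast_ne_zero.mpr hf)))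

end Twist

theorem twist_sub_id_bijective_general (p f : ℕ) [Fact p.Prime] (hf : f ≠ 0) (i : ℤ) (hi : i ≠ 0)
    (T : Type) [AddCommGroup T] :
    Function.Bijective (fun x : T ⊗[ℤ] K0 p f =>
      TensorProduct.map (LinearMap.id : T →ₗ[ℤ] T) (twist p f i) x - x) := by
  have hunit : IsUnit ((twist p f i - 1).lTensor T) :=
    (isUnit_twist_sub_one p f hf hi).map (Module.End.lTensorAlgHom ℤ (K0 p f) T)
  rw [LinearMap.lTensor_sub, Module.End.one_eq_id, LinearMap.lTensor_id] at hunit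
  exact (Module.End.isUnit_iff _).mp hunit

/-- for a nonzero integer `i` and a finitely generated abelian group `T`,
the additive endomorphism `x ↦ pⁱ·(1⊗σ)(x) − x` of `T ⊗_ℤ K₀` is bijective. -/
theorem twist_sub_id_bijective (p f : ℕ) [Fact p.Prime] (hf : f ≠ 0) (i : ℤ) (hi : i ≠ 0)
    (T : Type) [AddCommGroup T] [AddGroup.FG T] :
    Function.Bijective (fun x : T ⊗[ℤ] K0 p f =>
      TensorProduct.map (LinearMap.id : T →ₗ[ℤ] T) (twist p f i) x - x) :=
  twist_sub_id_bijective_general p f hf i hi T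
end

section
/- Let T be a finitely generated abelian group. Then the subgroup of elements of T ⊗_ℤ K₀ fixed by 1⊗σ is exactly the image of the natural map T ⊗_ℤ ℚ_p → T ⊗_ℤ K₀, where ℚ_p embeds into K₀ via the ring homomorphism ℤ_p = W(𝔽_p) → W(𝔽_q) induced by the inclusion of finite fields. -/
open TensorProduct

/-! Since `σ ^ f = 1` and `f` is invertible in `K₀`, the average `e = f⁻¹ ∑_{i<f} σⁱ` maps `K₀` into
the fixed field of `σ`, and `1 ⊗ e` is the identity on tensors fixed by `1 ⊗ σ`; hence every fixed
tensor comes from `T ⊗ K₀^σ`. The fixed field is `ℚ_p`: writing `c = a / pᵐ` with `a ∈ W(𝔽_q)`,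
`σ c = c` forces `F a = a`, so every Witt coordinate of `a` satisfies `x ^ p = x` and lies in `𝔽_p`. -/

open Polynomial in
theorem ZMod.mem_range_algebraMap_of_pow_eq_self {p : ℕ} [Fact p.Prime] {L : Type*} [Field L]
    [Algebra (ZMod p) L] {x : L} (hx : x ^ p = x) : x ∈ Set.range (algebraMap (ZMod p) L) := by
  classical
  set P : (ZMod p)[X] := X ^ p - X
  have hroots : P.roots = Finset.univ.val := by
    simpa [ZMod.card] using FiniteField.roots_X_pow_card_sub_X (ZMod p)
  have hdeg : P.natDegree = p :=
    FiniteField.X_pow_card_sub_X_natDegree_eq _ (Fact.out : p.Prime).one_lt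
  have hsplit := roots_map_of_injective_of_card_eq_natDegree (algebraMap (ZMod p) L).injective
    (by rw [hroots, hdeg]; simp [ZMod.card])
  have hxroot : x ∈ (P.map (algebraMap (ZMod p) L)).roots := by
    rw [mem_roots (Polynomial.map_ne_zero (FiniteField.X_pow_card_sub_X_ne_zero _
      (Fact.out : p.Prime).one_lt))]
    simp [hx]
  rw [← hsplit, hroots] at hxroot
  obtain ⟨a, -, rfl⟩ := Multiset.mem_map.1 hxroot
  exact ⟨a, rfl⟩

theorem Module.End.isUnit_natCast {R K : Type*} [Semiring R] [DivisionRing K] [CharZero K]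
    [Module R K] {n : ℕ} (hn : n ≠ 0) : IsUnit (n : Module.End R K) := by
  have hmul : ⇑(n : Module.End R K) = ((n : K) * ·) := funext fun c => by
    rw [Module.End.natCast_apply, nsmul_eq_mul]
  rw [Module.End.isUnit_iff, hmul]
  exact (Units.mk0 (n : K) (Nat.cast_ne_zero.2 hn)).mulLeft_bijective

theorem mul_geom_sum_eq_self_of_pow_eq_one {A : Type*} [Ring A] {x : A} {n : ℕ} (h : x ^ n = 1) :
    x * ∑ i ∈ Finset.range n, x ^ i = ∑ i ∈ Finset.range n, x ^ i := by
  rw [← sub_eq_zero, ← sub_one_mul, mul_geom_sum, h, sub_self]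

section FixedPoints

variable {R M K Q : Type*} [CommSemiring R] [AddCommMonoid M] [Module R M] [AddCommGroup K]
  [Module R K] [AddCommMonoid Q] [Module R Q]

theorem Module.End.lTensor_apply_eq_self_iff_mem_range {σ : Module.End R K} {ι : Q →ₗ[R] K}
    {n : ℕ} (hσ : σ ^ n = 1) (hn : IsUnit (n : Module.End R K))
    (hι : ∀ c, σ c = c ↔ c ∈ LinearMap.range ι) (x : M ⊗[R] K) :
    σ.lTensor M x = x ↔ x ∈ Set.range (ι.lTensor M) := by
  set φ := Module.End.lTensorAlgHom R K M
  set S := ∑ i ∈ Finset.range n, σ ^ i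
  set avg : Module.End R K := ↑hn.unit⁻¹ * S
  have hcomm : Commute σ ↑hn.unit⁻¹ := by
    refine Commute.units_inv_right ?_
    rw [hn.unit_spec]
    exact (Nat.cast_commute n σ).symm
  have havg : ∀ c, avg c ∈ LinearMap.range ι := fun c => (hι _).1 <| by
    change (σ * avg) c = avg c
    rw [hcomm.left_comm, mul_geom_sum_eq_self_of_pow_eq_one hσ]
  constructor
  · intro hx
    have hpow : ∀ i, φ (σ ^ i) x = x := fun i => by
      rw [map_pow, Module.End.pow_apply]
      exact Function.iterate_fixed hx i
    have hS : φ S x = φ n x := by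
      rw [map_sum, LinearMap.sum_apply, Finset.sum_congr rfl fun i _ => hpow i,
        Finset.sum_const, Finset.card_range, map_natCast, Module.End.natCast_apply]
    have hxavg : avg.lTensor M x = x := by
      change φ avg x = x
      rw [map_mul, Module.End.mul_apply, hS, ← Module.End.mul_apply, ← map_mul, hn.val_inv_mul,
        map_one, Module.End.one_apply]
    set avg' := avg.codRestrict (LinearMap.range ι) havg
    obtain ⟨y, hy⟩ := LinearMap.lTensor_surjective M ι.surjective_rangeRestrict (avg'.lTensor M x)
    refine ⟨y, ?_⟩
    change (ι.range.subtype ∘ₗ ι.rangeRestrict).lTensor M y = x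
    rw [LinearMap.lTensor_comp_apply, hy, ← LinearMap.lTensor_comp_apply,
      LinearMap.subtype_comp_codRestrict]
    exact hxavg
  · rintro ⟨y, rfl⟩
    rw [← LinearMap.lTensor_comp_apply]
    congr 2
    ext a
    exact (hι _).2 ⟨a, rfl⟩

end FixedPoints

namespace WittVector

variable {p : ℕ} [Fact p.Prime]

theorem frobenius_map_zmod {R : Type*} [CommRing R] [CharP R p] (g : ZMod p →+* R)
    (a : WittVector p (ZMod p)) : frobenius (map g a) = map g a := by
  ext n
  rw [coeff_frobenius_charP, map_coeff, ← map_pow, ZMod.pow_card]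

theorem iterate_frobenius_eq_self {k : Type*} [Field k] [Finite k] [CharP k p] {n : ℕ}
    (hk : Nat.card k = p ^ n) (a : WittVector p k) : frobenius^[n] a = a := by
  have := Fintype.ofFinite k
  ext i
  rw [iterate_frobenius_coeff, ← hk, Nat.card_eq_fintype_card, FiniteField.pow_card]

theorem mem_range_map_of_frobenius_eq_self {k : Type*} [Field k] [Algebra (ZMod p) k] [CharP k p]
    {a : WittVector p k} (ha : frobenius a = a) :
    a ∈ Set.range (map (algebraMap (ZMod p) k)) := by
  choose b hb using fun n => ZMod.mem_range_algebraMap_of_pow_eq_self <|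
    (coeff_frobenius_charP p a n).symm.trans (congrArg (coeff · n) ha)
  exact ⟨mk p b, by ext n; rw [map_coeff]; exact hb n⟩

theorem exists_eq_algebraMap_div_pow {k : Type*} [Field k] [CharP k p] [PerfectRing k p]
    (c : FractionRing (WittVector p k)) :
    ∃ (a : WittVector p k) (m : ℕ),
      c = algebraMap _ _ a / (p : FractionRing (WittVector p k)) ^ m := by
  obtain ⟨a, b, hb, rfl⟩ := IsFractionRing.div_surjective (A := WittVector p k) c
  obtain ⟨m, u, rfl⟩ := exists_eq_pow_p_mul' b (nonZeroDivisors.ne_zero hb)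
  refine ⟨a * ↑u⁻¹, m, ?_⟩
  rw [map_mul, map_mul, map_pow, map_natCast, map_units_inv, div_mul_eq_div_div_swap,
    div_eq_mul_inv (algebraMap _ _ a)]

instance : CharZero (WittVector p (ZMod p)) :=
  charZero_of_injective_ringHom (WittVector.equiv p).symm.injective

end WittVector

section Frobenius

variable (p f : ℕ) [Fact p.Prime]

instance : CharZero (K0 p f) :=
  charZero_of_injective_ringHom (iota p f).injective

theorem sigma_algebraMap (a : WittVector p (GaloisField p f)) :
    sigma p f (algebraMap _ (K0 p f) a) = algebraMap _ (K0 p f) (WittVector.frobenius a) := by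
  simp [sigma, WittVector.FractionRing.frobenius]

theorem iota_algebraMap (a : WittVector p (ZMod p)) :
    iota p f (algebraMap _ (Qp p) a)
      = algebraMap _ (K0 p f) (WittVector.map (algebraMap (ZMod p) (GaloisField p f)) a) :=
  IsFractionRing.lift_algebraMap _ _

theorem sigma_comp_iota : (sigma p f : K0 p f →+* K0 p f).comp (iota p f) = iota p f :=
  IsLocalization.ringHom_ext (nonZeroDivisors (WittVector p (ZMod p))) <| RingHom.ext fun a => by
    simp only [RingHom.comp_apply, RingHom.coe_coe, iota_algebraMap, sigma_algebraMap,
      WittVector.frobenius_map_zmod]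

theorem mem_range_iota_of_sigma_eq_self {c : K0 p f} (hc : sigma p f c = c) :
    c ∈ Set.range (iota p f) := by
  obtain ⟨a, m, rfl⟩ := WittVector.exists_eq_algebraMap_div_pow c
  have hpm : (p : K0 p f) ^ m ≠ 0 :=
    pow_ne_zero _ (Nat.cast_ne_zero.2 (Fact.out : p.Prime).ne_zero)
  have hfrob : WittVector.frobenius a = a := by
    rw [map_div₀, sigma_algebraMap, map_pow, map_natCast, div_left_inj' hpm] at hc
    exact IsFractionRing.injective _ _ hc
  obtain ⟨b, rfl⟩ := WittVector.mem_range_map_of_frobenius_eq_self hfrob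
  exact ⟨algebraMap _ (Qp p) b / (p : Qp p) ^ m, by
    rw [map_div₀, map_pow, map_natCast, iota_algebraMap]⟩

theorem sigmaLin_apply_eq_self_iff (c : K0 p f) :
    sigmaLin p f c = c ↔ c ∈ LinearMap.range (iotaLin p f) :=
  ⟨fun hc => mem_range_iota_of_sigma_eq_self p f hc, by
    rintro ⟨x, rfl⟩
    exact DFunLike.congr_fun (sigma_comp_iota p f) x⟩

end Frobenius

theorem fixedPoints_eq_range_Qp_general (p f : ℕ) [Fact p.Prime] (hf : f ≠ 0)
    (T : Type) [AddCommGroup T] :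
    {x : T ⊗[ℤ] K0 p f | TensorProduct.map (LinearMap.id : T →ₗ[ℤ] T) (sigmaLin p f) x = x}
      = Set.range (TensorProduct.map (LinearMap.id : T →ₗ[ℤ] T) (iotaLin p f)) :=
  Set.ext <| Module.End.lTensor_apply_eq_self_iff_mem_range (sigmaLin_pow_eq_one p f hf)
    (Module.End.isUnit_natCast hf) (sigmaLin_apply_eq_self_iff p f)

/-- for a finitely generated abelian group `T`, the fixed points of `1⊗σ`
on `T ⊗_ℤ K₀` are exactly the image of the natural map `T ⊗_ℤ ℚ_p → T ⊗_ℤ K₀`. -/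
theorem fixedPoints_eq_range_Qp (p f : ℕ) [Fact p.Prime] (hf : f ≠ 0)
    (T : Type) [AddCommGroup T] [AddGroup.FG T] :
    {x : T ⊗[ℤ] K0 p f | TensorProduct.map (LinearMap.id : T →ₗ[ℤ] T) (sigmaLin p f) x = x}
      = Set.range (TensorProduct.map (LinearMap.id : T →ₗ[ℤ] T) (iotaLin p f)) :=
  fixedPoints_eq_range_Qp_general p f hf T
end

section
/- The sequence 0 → ℚ_p → K₀ → K₀ → ℚ_p → 0 is exact, where the first map is the natural embedding of ℚ_p into K₀, the second map is σ − 1, and the third map is the trace form of the finite field extension K₀/ℚ_p. -/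
open WittVector

section Aux

variable (p : ℕ) [Fact p.Prime]

/-- transfer of divisibility along the comparison with `ℤ_[p]` -/
private theorem witt_zmod_dvd_iff (n : ℕ) (a : WittVector p (ZMod p)) :
    (p : WittVector p (ZMod p)) ^ n ∣ a ↔ (p : ℤ_[p]) ^ n ∣ (WittVector.equiv p) a := by
  constructor
  · intro h
    have := map_dvd (WittVector.equiv p) h
    simpa using this
  · intro h
    have := map_dvd (WittVector.equiv p).symm h
    simpa using this

private theorem padic_smod_iff (n : ℕ) (x y : ℤ_[p]) :
    x ≡ y [SMOD ((IsLocalRing.maximalIdeal ℤ_[p]) ^ n • ⊤ : Submodule ℤ_[p] ℤ_[p])] ↔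
      (p : ℤ_[p]) ^ n ∣ x - y := by
  rw [SModEq.sub_mem]
  simp only [← Ideal.one_eq_top, smul_eq_mul, mul_one, PadicInt.maximalIdeal_eq_span_p,
    Ideal.span_singleton_pow, Ideal.mem_span_singleton]

/-- `𝕎 (ZMod p)` is `p`-adically complete. -/
private theorem witt_exists_limit (s : ℕ → WittVector p (ZMod p))
    (hs : ∀ m n : ℕ, m ≤ n → (p : WittVector p (ZMod p)) ^ m ∣ s n - s m) :
    ∃ L, ∀ n, (p : WittVector p (ZMod p)) ^ n ∣ L - s n := by
  obtain ⟨L, hL⟩ := IsPrecomplete.prec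
    (inferInstance : IsPrecomplete (IsLocalRing.maximalIdeal ℤ_[p]) ℤ_[p])
    (f := fun n => WittVector.equiv p (s n))
    (fun {m n} h => by
      rw [padic_smod_iff]
      rw [← map_sub]
      rw [← witt_zmod_dvd_iff]
      simpa [neg_sub] using dvd_neg.mpr (hs m n h))
  refine ⟨(WittVector.equiv p).symm L, fun n => ?_⟩
  rw [witt_zmod_dvd_iff, map_sub, RingEquiv.apply_symm_apply]
  have := (padic_smod_iff p n _ _).mp (hL n)
  simpa [neg_sub] using dvd_neg.mpr this

variable {k : Type*} [Field k] [CharP k p] [PerfectRing k p]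

/-- `𝕎 k` is `p`-adically separated. -/
private theorem witt_eq_zero_of_forall_dvd (x : WittVector p k)
    (h : ∀ n, (p : WittVector p k) ^ n ∣ x) : x = 0 := by
  by_contra hx
  obtain ⟨m, u, hmu⟩ := WittVector.exists_eq_pow_p_mul' x hx
  obtain ⟨c, hc⟩ := h (m + 1)
  rw [hmu, pow_succ] at hc
  have hpne : (p : WittVector p k) ^ m ≠ 0 := pow_ne_zero _ (WittVector.p_nonzero p k)
  have : (u : WittVector p k) = p * c := by
    apply mul_left_cancel₀ hpne
    rw [hc]; ring
  have : IsUnit ((p : WittVector p k) * c) := this ▸ u.isUnit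
  exact (WittVector.irreducible p).not_isUnit (isUnit_of_mul_isUnit_left this)

/-- peel the leading Teichmüller coefficient -/
private theorem exists_teichmuller_add_p_mul (y : WittVector p k) :
    ∃ z : WittVector p k,
      y = WittVector.teichmuller p (y.coeff 0) + (p : WittVector p k) * z := by
  set d := y - WittVector.teichmuller p (y.coeff 0) with hd
  have h0 : d.coeff 0 = 0 := by
    have : WittVector.constantCoeff d
        = WittVector.constantCoeff y - WittVector.constantCoeff (WittVector.teichmuller p (y.coeff 0)) :=
      map_sub _ _ _
    simpa [WittVector.constantCoeff_apply, WittVector.teichmuller_coeff_zero] using this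
  obtain ⟨w, hw⟩ := (WittVector.frobenius_bijective p k).surjective
    (WittVector.mk p fun n => d.coeff (n + 1))
  have hvd : WittVector.verschiebung (WittVector.frobenius w) = d := by
    rw [hw]
    ext n
    cases n with
    | zero => rw [WittVector.verschiebung_coeff_zero, h0]
    | succ n => rw [WittVector.verschiebung_coeff_add_one]; simp [WittVector.coeff_mk]
  rw [WittVector.verschiebung_frobenius] at hvd
  refine ⟨w, ?_⟩
  have hyd : y = WittVector.teichmuller p (y.coeff 0) + d := by rw [hd]; ring
  nth_rewrite 1 [hyd]
  rw [← hvd]; ring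



variable (p : ℕ) [Fact p.Prime]

/-- In a field of characteristic `p`, the solutions of `x ^ p = x` lie in the prime field. -/
private theorem mem_range_of_pow_eq {K : Type*} [Field K] (g : ZMod p →+* K) (x : K)
    (hx : x ^ p = x) : ∃ c, g c = x := by
  classical
  by_contra hc
  push_neg at hc
  have hp1 : 1 < p := (Fact.out : p.Prime).one_lt
  set P : Polynomial K := Polynomial.X ^ p - Polynomial.X with hP
  have hdegree : P.degree = p := by
    have hlt : (Polynomial.X : Polynomial K).degree < ((Polynomial.X : Polynomial K) ^ p).degree := by
      rw [Polynomial.degree_X_pow, Polynomial.degree_X]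
      exact_mod_cast hp1
    rw [hP, Polynomial.degree_sub_eq_left_of_degree_lt hlt, Polynomial.degree_X_pow]
  have hdeg : P.natDegree = p := Polynomial.natDegree_eq_of_degree_eq_some hdegree
  have hPne : P ≠ 0 := fun h => by rw [h] at hdegree; simp at hdegree
  have heval : ∀ y : K, y ^ p = y → y ∈ P.roots.toFinset := by
    intro y hy
    rw [Multiset.mem_toFinset, Polynomial.mem_roots hPne]
    simp [hP, Polynomial.IsRoot, hy]
  set s : Finset K := insert x (Finset.univ.image g) with hs
  have hsub : s ⊆ P.roots.toFinset := by
    intro y hy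
    rw [hs, Finset.mem_insert] at hy
    rcases hy with rfl | hy
    · exact heval y hx
    · obtain ⟨c, _, rfl⟩ := Finset.mem_image.mp hy
      refine heval _ ?_
      rw [← map_pow, ZMod.pow_card]
  have hcard : s.card = p + 1 := by
    rw [hs, Finset.card_insert_of_notMem, Finset.card_image_of_injective _ g.injective]
    · simp [ZMod.card]
    · intro hmem
      obtain ⟨c, _, hcx⟩ := Finset.mem_image.mp hmem
      exact hc c hcx
  have : s.card ≤ p := by
    calc s.card ≤ P.roots.toFinset.card := Finset.card_le_card hsub
    _ ≤ Multiset.card P.roots := P.roots.toFinset_card_le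
    _ ≤ P.natDegree := P.card_roots'
    _ = p := hdeg
  omega



variable {k : Type*} [Field k] [CharP k p] [PerfectRing k p]

private theorem witt_fixed (g : ZMod p →+* k) (a : WittVector p k)
    (ha : WittVector.map (_root_.frobenius k p) a = a) :
    ∃ b, WittVector.map g b = a := by
  have hcoeff : ∀ n, ∃ cc, g cc = a.coeff n := by
    intro n
    refine mem_range_of_pow_eq p g _ ?_
    have := congrArg (fun z : WittVector p k => z.coeff n) ha
    simpa [WittVector.map_coeff, _root_.frobenius_def] using this
  choose c hc using hcoeff
  refine ⟨WittVector.mk p c, ?_⟩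
  ext n
  rw [WittVector.map_coeff]
  simp [WittVector.coeff_mk, hc]

private theorem witt_span [Fintype k] (g : ZMod p →+* k) (x : WittVector p k) :
    ∃ c : k → WittVector p (ZMod p),
      x = ∑ t : k, WittVector.map g (c t) * WittVector.teichmuller p t := by
  classical
  choose tail htail using fun y : WittVector p k => exists_teichmuller_add_p_mul p y
  set d : ℕ → WittVector p k := fun n => Nat.rec x (fun _ y => tail y) n with hd
  have hdsucc : ∀ n, d (n + 1) = tail (d n) := fun n => rfl
  set b : ℕ → k := fun n => (d n).coeff 0 with hb
  have hstep : ∀ n, d n = WittVector.teichmuller p (b n) + (p : WittVector p k) * d (n + 1) := by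
    intro n
    rw [hdsucc]
    exact htail (d n)
  have hpart : ∀ n, x = (∑ i ∈ Finset.range n,
      (p : WittVector p k) ^ i * WittVector.teichmuller p (b i))
      + (p : WittVector p k) ^ n * d n := by
    intro n
    induction n with
    | zero => simp [hd]
    | succ n ih =>
      rw [ih, Finset.sum_range_succ]
      nth_rewrite 1 [hstep n]
      ring
  set capp : ℕ → k → WittVector p (ZMod p) := fun n t => ∑ i ∈ Finset.range n,
      if b i = t then (p : WittVector p (ZMod p)) ^ i else 0 with hcapp
  have hcauchy : ∀ t (m n : ℕ), m ≤ n →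
      (p : WittVector p (ZMod p)) ^ m ∣ capp n t - capp m t := by
    intro t m n h
    have hsplit := Finset.sum_range_add_sum_Ico
      (fun i => if b i = t then (p : WittVector p (ZMod p)) ^ i else 0) h
    rw [hcapp]
    simp only
    rw [← hsplit, add_sub_cancel_left]
    apply Finset.dvd_sum
    intro i hi
    refine dvd_trans (pow_dvd_pow _ (Finset.mem_Ico.mp hi).1) ?_
    split
    · rfl
    · exact dvd_zero _
  choose c hc using fun t => witt_exists_limit p (fun n => capp n t)
    (fun m n h => hcauchy t m n h)
  refine ⟨c, ?_⟩
  have key : ∀ n, (p : WittVector p k) ^ n ∣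
      x - ∑ t : k, WittVector.map g (c t) * WittVector.teichmuller p t := by
    intro n
    have hmap : ∀ t, WittVector.map g (capp n t) = ∑ i ∈ Finset.range n,
        if b i = t then (p : WittVector p k) ^ i else 0 := by
      intro t
      rw [hcapp]
      simp only [map_sum]
      refine Finset.sum_congr rfl fun i _ => ?_
      split <;> simp
    have h1 : (∑ t : k, WittVector.map g (capp n t) * WittVector.teichmuller p t)
        = ∑ i ∈ Finset.range n, (p : WittVector p k) ^ i * WittVector.teichmuller p (b i) := by
      simp_rw [hmap, Finset.sum_mul, ite_mul, zero_mul]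
      rw [Finset.sum_comm]
      refine Finset.sum_congr rfl fun i _ => ?_
      simp
    have h2 : x - (∑ t : k, WittVector.map g (capp n t) * WittVector.teichmuller p t)
        = (p : WittVector p k) ^ n * d n := by
      rw [h1]
      nth_rewrite 1 [hpart n]
      ring
    have h3 : (∑ t : k, WittVector.map g (c t) * WittVector.teichmuller p t)
          - (∑ t : k, WittVector.map g (capp n t) * WittVector.teichmuller p t)
        = ∑ t : k, WittVector.map g (c t - capp n t) * WittVector.teichmuller p t := by
      rw [← Finset.sum_sub_distrib]
      refine Finset.sum_congr rfl fun t _ => ?_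
      rw [map_sub]
      ring
    have h4 : x - (∑ t : k, WittVector.map g (c t) * WittVector.teichmuller p t)
        = (p : WittVector p k) ^ n * d n
          - ∑ t : k, WittVector.map g (c t - capp n t) * WittVector.teichmuller p t := by
      rw [← h2, ← h3]
      ring
    rw [h4]
    apply dvd_sub
    · exact Dvd.intro _ rfl
    · apply Finset.dvd_sum
      intro t _
      obtain ⟨e, he⟩ := hc t n
      rw [he, map_mul, map_pow, map_natCast]
      exact ⟨WittVector.map g e * WittVector.teichmuller p t, by ring⟩
  have := witt_eq_zero_of_forall_dvd p _ key
  rw [sub_eq_zero] at this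
  exact this

end Aux


open TensorProduct

/-- `K₀` as a `ℚ_p`-algebra via the embedding `ι`. -/
noncomputable def K0algebra (p f : ℕ) [Fact p.Prime] : Algebra (Qp p) (K0 p f) :=
  (iota p f).toAlgebra

/-- The trace form of the finite field extension `K₀/ℚ_p`. -/
noncomputable def K0trace (p f : ℕ) [Fact p.Prime] : K0 p f → Qp p :=
  letI := K0algebra p f
  Algebra.trace (Qp p) (K0 p f)

set_option maxHeartbeats 2000000 in
set_option synthInstance.maxHeartbeats 400000 in
/-- the sequence `0 → ℚ_p → K₀ → K₀ → ℚ_p → 0` is exact, where the first map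
is the natural embedding `ι`, the second is `σ − 1`, and the third is the trace form of
the finite extension `K₀/ℚ_p`. -/
theorem Qp_K0_K0_Qp_exact (p f : ℕ) [Fact p.Prime] (hf : f ≠ 0) :
    Function.Injective (iota p f) ∧
    (∀ x : K0 p f, sigma p f x - x = 0 ↔ x ∈ Set.range (iota p f)) ∧
    (∀ x : K0 p f, K0trace p f x = 0 ↔ ∃ y : K0 p f, sigma p f y - y = x) ∧
    Function.Surjective (K0trace p f) := by
  classical
  letI : Algebra (Qp p) (K0 p f) := K0algebra p f
  haveI := Fintype.ofFinite (GaloisField p f)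
  set g : ZMod p →+* GaloisField p f := algebraMap (ZMod p) (GaloisField p f) with hg
  set A : WittVector p (GaloisField p f) →+* K0 p f :=
    algebraMap (WittVector p (GaloisField p f)) (K0 p f) with hA
  set B : WittVector p (ZMod p) →+* Qp p :=
    algebraMap (WittVector p (ZMod p)) (Qp p) with hB
  have hAinj : Function.Injective A := IsFractionRing.injective _ _
  have hBinj : Function.Injective B := IsFractionRing.injective _ _
  have hWinj : Function.Injective (WittVector.map (p := p) g) :=
    WittVector.map_injective _ g.injective
  have hp0 : (p : K0 p f) ≠ 0 := WittVector.FractionRing.p_nonzero p _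
  have hlift : ∀ a, iota p f (B a) = A (WittVector.map g a) := fun a =>
    IsFractionRing.lift_algebraMap _ a
  have hfrobfix : ∀ a : WittVector p (ZMod p),
      WittVector.frobeniusEquiv p (GaloisField p f) (WittVector.map g a)
        = WittVector.map g a := by
    intro a
    show WittVector.frobenius (WittVector.map g a) = _
    rw [WittVector.frobenius_eq_map_frobenius]
    ext n
    rw [WittVector.map_coeff, WittVector.map_coeff]
    rw [frobenius_def, ← map_pow, ZMod.pow_card]
  have hsigmaA : ∀ w, sigma p f (A w)
      = A (WittVector.frobeniusEquiv p (GaloisField p f) w) := fun w =>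
    IsFractionRing.ringEquivOfRingEquiv_algebraMap _ w
  have hsigmaiota : ∀ q, sigma p f (iota p f q) = iota p f q := by
    intro q
    have hext : ((sigma p f : K0 p f ≃+* K0 p f) : K0 p f →+* K0 p f).comp (iota p f)
        = iota p f := by
      apply IsLocalization.ringHom_ext (nonZeroDivisors (WittVector p (ZMod p)))
      ext a
      simp only [RingHom.comp_apply, RingHom.coe_comp, Function.comp_apply,
        RingEquiv.coe_toRingHom]
      rw [hlift, hsigmaA, hfrobfix, ← hlift]
    exact RingHom.congr_fun hext q
  have hrep : ∀ x : K0 p f, ∃ (m : ℕ) (a : WittVector p (GaloisField p f)),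
      (p : K0 p f) ^ m * x = A a := by
    intro x
    obtain ⟨⟨a, b⟩, hab⟩ := IsLocalization.surj
      (nonZeroDivisors (WittVector p (GaloisField p f))) x
    have hb0 : (b : WittVector p (GaloisField p f)) ≠ 0 := nonZeroDivisors.ne_zero b.2
    obtain ⟨m, u, hbu⟩ := WittVector.exists_eq_pow_p_mul' (b : WittVector p (GaloisField p f)) hb0
    have hu0 : A ↑u ≠ 0 := fun h => u.ne_zero (hAinj (by rw [h, map_zero]))
    refine ⟨m, a * ↑u⁻¹, ?_⟩
    apply mul_right_cancel₀ hu0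
    have h1 : A (a * ↑u⁻¹) * A ↑u = A a := by
      rw [← map_mul, mul_assoc]
      simp
    rw [h1]
    calc (p : K0 p f) ^ m * x * A ↑u = x * ((p : K0 p f) ^ m * A ↑u) := by ring
    _ = x * A ↑b := by rw [hbu, map_mul, map_pow, map_natCast]
    _ = A a := hab
  -- characteristic zero
  haveI hCZR : CharZero (WittVector p (ZMod p)) := by
    refine ⟨fun a b h => ?_⟩
    have h2 : (a : ℤ_[p]) = b := by
      have := congrArg (WittVector.equiv p) h
      simpa using this
    exact_mod_cast h2
  haveI hCZW : CharZero (WittVector p (GaloisField p f)) := by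
    refine ⟨fun a b h => ?_⟩
    have h2 : ((a : ℕ) : WittVector p (ZMod p)) = b := by
      apply hWinj
      rw [map_natCast, map_natCast]
      exact h
    exact_mod_cast h2
  haveI hCZQ : CharZero (Qp p) := charZero_of_injective_algebraMap hBinj
  haveI hCZK : CharZero (K0 p f) :=
    charZero_of_injective_algebraMap (hA ▸ hAinj)
  -- part 2
  have hpart2 : ∀ x : K0 p f, sigma p f x - x = 0 ↔ x ∈ Set.range (iota p f) := by
    intro x
    rw [sub_eq_zero]
    constructor
    · intro hx
      obtain ⟨m, a, hma⟩ := hrep x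
      have h1 : sigma p f ((p : K0 p f) ^ m * x) = (p : K0 p f) ^ m * x := by
        rw [map_mul, map_pow, map_natCast, hx]
      rw [hma, hsigmaA] at h1
      have h2 : WittVector.frobeniusEquiv p (GaloisField p f) a = a := hAinj h1
      have h3 : WittVector.map (_root_.frobenius (GaloisField p f) p) a = a := by
        have h2' : WittVector.frobenius a = a := h2
        rwa [WittVector.frobenius_eq_map_frobenius] at h2'
      obtain ⟨b, hb⟩ := witt_fixed p g a h3
      refine ⟨B b / (p : Qp p) ^ m, ?_⟩
      rw [map_div₀, hlift, hb, map_pow, map_natCast, ← hma]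
      field_simp
    · rintro ⟨q, rfl⟩
      exact hsigmaiota q
  -- finite dimensionality
  have hspan : ∀ x : K0 p f, x ∈ Submodule.span (Qp p)
      (Set.range fun t : GaloisField p f => A (WittVector.teichmuller p t)) := by
    intro x
    obtain ⟨m, a, hma⟩ := hrep x
    obtain ⟨c, hc⟩ := witt_span p g a
    have hx : x = ∑ t : GaloisField p f,
        (B (c t) / (p : Qp p) ^ m) • A (WittVector.teichmuller p t) := by
      have hAa : A a = ∑ t : GaloisField p f,
          iota p f (B (c t)) * A (WittVector.teichmuller p t) := by
        rw [hc, map_sum]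
        refine Finset.sum_congr rfl fun t _ => ?_
        rw [map_mul, hlift]
      have hsmul : ∀ (q : Qp p) (y : K0 p f), q • y = iota p f q * y := fun q y => rfl
      have hpm : (p : K0 p f) ^ m ≠ 0 := pow_ne_zero _ hp0
      have hiotapow : iota p f ((p : Qp p) ^ m) = (p : K0 p f) ^ m := by
        rw [map_pow, map_natCast]
      refine mul_left_cancel₀ hpm ?_
      rw [hma, hAa, Finset.mul_sum]
      refine Finset.sum_congr rfl fun t _ => ?_
      rw [hsmul, map_div₀, hiotapow]
      field_simp
    rw [hx]
    exact Submodule.sum_mem _ fun t _ =>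
      Submodule.smul_mem _ _ (Submodule.subset_span ⟨t, rfl⟩)
  haveI hFD : FiniteDimensional (Qp p) (K0 p f) := by
    refine ⟨⟨(Set.finite_range fun t : GaloisField p f =>
      A (WittVector.teichmuller p t)).toFinset, ?_⟩⟩
    rw [Set.Finite.coe_toFinset]
    exact top_unique fun x _ => hspan x
  haveI hInt : Algebra.IsIntegral (Qp p) (K0 p f) := Algebra.IsIntegral.of_finite _ _
  haveI hSep : Algebra.IsSeparable (Qp p) (K0 p f) :=
    Algebra.IsSeparable.of_integral _ _
  have htracesurj : Function.Surjective (Algebra.trace (Qp p) (K0 p f)) :=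
    Algebra.trace_surjective (Qp p) (K0 p f)
  -- sigma as an algebra equivalence
  let σA : K0 p f ≃ₐ[Qp p] K0 p f :=
    { sigma p f with commutes' := fun q => hsigmaiota q }
  let S : K0 p f →ₗ[Qp p] K0 p f := σA.toLinearMap - LinearMap.id
  have hSapply : ∀ x, S x = sigma p f x - x := fun x => rfl
  have hker : LinearMap.ker S = LinearMap.range (Algebra.linearMap (Qp p) (K0 p f)) := by
    ext x
    simp only [LinearMap.mem_ker, LinearMap.mem_range, Algebra.linearMap_apply]
    rw [hSapply]
    rw [hpart2 x]
    constructor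
    · rintro ⟨q, rfl⟩; exact ⟨q, rfl⟩
    · rintro ⟨q, rfl⟩; exact ⟨q, rfl⟩
  have htr_inv : ∀ x, Algebra.trace (Qp p) (K0 p f) (sigma p f x)
      = Algebra.trace (Qp p) (K0 p f) x := fun x => Algebra.trace_eq_of_algEquiv σA x
  have hle : LinearMap.range S ≤ LinearMap.ker (Algebra.trace (Qp p) (K0 p f)) := by
    rintro _ ⟨y, rfl⟩
    rw [LinearMap.mem_ker, hSapply, map_sub, htr_inv, sub_self]
  have heq : LinearMap.range S = LinearMap.ker (Algebra.trace (Qp p) (K0 p f)) := by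
    refine Submodule.eq_of_le_of_finrank_eq hle ?_
    have e1 := LinearMap.finrank_range_add_finrank_ker S
    have e2 := LinearMap.finrank_range_add_finrank_ker (Algebra.trace (Qp p) (K0 p f))
    have e3 : Module.finrank (Qp p) (LinearMap.ker S) = 1 := by
      rw [hker]
      have hinj : Function.Injective (Algebra.linearMap (Qp p) (K0 p f)) :=
        (iota p f).injective
      rw [LinearMap.finrank_range_of_inj hinj, Module.finrank_self]
    have e4 : Module.finrank (Qp p)
        (LinearMap.range (Algebra.trace (Qp p) (K0 p f))) = 1 := by
      rw [LinearMap.range_eq_top.mpr htracesurj, finrank_top, Module.finrank_self]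
    omega
  refine ⟨(iota p f).injective, hpart2, ?_, ?_⟩
  · intro x
    show Algebra.trace (Qp p) (K0 p f) x = 0 ↔ _
    rw [← LinearMap.mem_ker, ← heq, LinearMap.mem_range]
    constructor
    · rintro ⟨y, rfl⟩
      exact ⟨y, (hSapply y).symm⟩
    · rintro ⟨y, rfl⟩
      exact ⟨y, hSapply y⟩
  · show Function.Surjective (Algebra.trace (Qp p) (K0 p f))
    exact htracesurj
end

section
/- Let K be a finite extension of ℚ_p. Then for every positive integer n, the quotient group K^×/(K^×)ⁿ is finite. -/
/-!
Let `R` be the integral closure of `ℤ_[p]` in `K`, a Dedekind domain finite over `ℤ_[p]`. Its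
nonzero primes all contain `p` and `R ⧸ (p)` is finite, so `R` has finitely many primes; hence it
is a PID and `Kˣ` is generated by `Rˣ` and finitely many prime elements. As `R` is `p`-adically
complete, a Newton iteration makes every unit `≡ 1 mod n²p²` an `n`-th power, and `R ⧸ (n²p²)` is
finite, so `Rˣ` has finite image in `Kˣ ⧸ (Kˣ)ⁿ`. This quotient is therefore a finitely generated
torsion abelian group, hence finite.
-/

open Polynomial

theorem exists_one_add_mul_pow_eq {A : Type*} [CommRing A] (a : A) (m : ℕ) :
    ∃ E : A[X], ∀ y : A, (1 + a * y) ^ m = 1 + m * a * y + a ^ 2 * y ^ 2 * E.eval y := by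
  obtain ⟨E, hE⟩ := (X ^ m : A[X][X]).binomExpansion 1 (C a * X)
  refine ⟨E, fun y => ?_⟩
  have := congrArg (eval y) hE
  simp only [eval_pow, eval_X, one_pow, derivative_X_pow, eval_mul, eval_C, eval_natCast,
    eval_add, eval_one, mul_one] at this
  linear_combination this

section AdicComplete

variable {A : Type*} [CommRing A] {I : Ideal A}

theorem Ideal.sub_mem_pow_of_forall_succ_sub_mem {f : ℕ → A}
    (h : ∀ k, f (k + 1) - f k ∈ I ^ k) {m n : ℕ} (hmn : m ≤ n) : f n - f m ∈ I ^ m := by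
  induction n, hmn using Nat.le_induction with
  | base => simp
  | succ n hmn ih =>
    rw [← sub_add_sub_cancel _ (f n)]
    exact add_mem (Ideal.pow_le_pow_right hmn (h n)) ih

theorem IsPrecomplete.exists_sub_mem_pow [IsPrecomplete I A] {f : ℕ → A}
    (h : ∀ k, f (k + 1) - f k ∈ I ^ k) : ∃ L, ∀ k, L - f k ∈ I ^ k := by
  obtain ⟨L, hL⟩ := IsPrecomplete.prec ‹_› (I := I) (f := f) fun hmn => by
    rw [SModEq.sub_mem, smul_eq_mul, Ideal.mul_top, sub_mem_comm_iff]
    exact Ideal.sub_mem_pow_of_forall_succ_sub_mem h hmn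
  refine ⟨L, fun k => ?_⟩
  simpa only [SModEq.sub_mem, smul_eq_mul, Ideal.mul_top, sub_mem_comm_iff] using hL k

theorem IsHausdorff.eq_zero_of_forall_mem_pow [IsHausdorff I A] {x : A} (h : ∀ k, x ∈ I ^ k) :
    x = 0 :=
  IsHausdorff.haus ‹_› x fun k => by simpa [SModEq.sub_mem] using h k

theorem IsAdicComplete.exists_eq_mul_eval [IsAdicComplete I A] {π : A} (hπ : π ∈ I)
    (Q : A[X]) : ∃ y, y = π * Q.eval y := by
  let y : ℕ → A := fun k => Nat.rec 0 (fun _ yk => π * Q.eval yk) k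
  have hy (k : ℕ) : y (k + 1) = π * Q.eval (y k) := rfl
  have hstep (k : ℕ) : y (k + 1) - y k ∈ I ^ (k + 1) := by
    induction k with
    | zero => simpa [hy, y] using Ideal.mul_mem_right _ _ hπ
    | succ k ih =>
      rw [hy (k + 1), hy k, ← mul_sub, pow_succ']
      exact Ideal.mul_mem_mul hπ (Ideal.mem_of_dvd _ (sub_dvd_eval_sub _ _ _) ih)
  obtain ⟨L, hL⟩ := IsPrecomplete.exists_sub_mem_pow fun k =>
    Ideal.pow_le_pow_right k.le_succ (hstep k)
  refine ⟨L, sub_eq_zero.mp (IsHausdorff.eq_zero_of_forall_mem_pow (I := I) fun k => ?_)⟩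
  have hsplit : L - π * Q.eval L = (L - y (k + 1)) + π * (Q.eval (y k) - Q.eval L) := by
    rw [hy]; ring
  rw [hsplit]
  exact add_mem (Ideal.pow_le_pow_right k.le_succ (hL _)) (Ideal.mul_mem_left _ π
    (Ideal.mem_of_dvd _ (sub_dvd_eval_sub _ _ _) (sub_mem_comm_iff.mp (hL k))))

theorem IsAdicComplete.exists_pow_eq_one_add [IsAdicComplete I A] {π : A} (hπ : π ∈ I)
    (n : ℕ) (t : A) : ∃ x, x ^ n = 1 + n ^ 2 * π ^ 2 * t := by
  obtain ⟨E, hE⟩ := exists_one_add_mul_pow_eq (n * π) n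
  -- with `x = 1 + nπy`, the equation `xⁿ = 1 + n²π²t` becomes `y = π (t - y² E(y))`
  obtain ⟨y, hy⟩ := exists_eq_mul_eval hπ (C t - X ^ 2 * E)
  refine ⟨1 + n * π * y, ?_⟩
  simp only [eval_sub, eval_C, eval_mul, eval_pow, eval_X] at hy
  rw [hE]
  linear_combination (n : A) ^ 2 * π * hy

end AdicComplete

universe u in
theorem IsAdicComplete.of_finite {R : Type u} [CommRing R] [IsNoetherianRing R] (I : Ideal R)
    [IsAdicComplete I R] (M : Type u) [AddCommGroup M] [Module R M] [Module.Finite R M] :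
    IsAdicComplete I M := by
  have : IsHausdorff I M := .of_le_jacobson I M (IsAdicComplete.le_jacobson_bot I)
  suffices IsPrecomplete I M from {}
  refine AdicCompletion.of_surjective_iff.mp fun y => ?_
  obtain ⟨t, rfl⟩ := (AdicCompletion.ofTensorProduct_bijective_of_finite_of_isNoetherian I M).2 y
  induction t using TensorProduct.induction_on with
  | zero => exact ⟨0, by simp⟩
  | tmul r x =>
    obtain ⟨r, rfl⟩ := AdicCompletion.of_surjective I R r
    refine ⟨r • x, ?_⟩
    rw [AdicCompletion.ofTensorProduct_tmul, ← Algebra.algebraMap_self_apply r,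
      ← AdicCompletion.algebraMap_apply, map_smul]
    exact (algebraMap_smul _ r _).symm
  | add s t hs ht =>
    obtain ⟨a, ha⟩ := hs
    obtain ⟨b, hb⟩ := ht
    exact ⟨a + b, by simp [ha, hb]⟩

theorem MonoidHom.finite_range_of_ker_le {G H H' : Type*} [Group G] [Group H] [Group H']
    [Finite H] (f : G →* H) (g : G →* H') (h : f.ker ≤ g.ker) : Finite g.range :=
  have := Subgroup.finiteIndex_of_le h
  .of_equiv _ (QuotientGroup.quotientKerEquivRange g).toEquiv

theorem CommGroup.finite_quotient_range_powMonoidHom {G : Type*} [CommGroup G] {n : ℕ}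
    (hn : 0 < n) {S : Set G} (hS : Subgroup.closure S = ⊤)
    (hfin : (QuotientGroup.mk '' S : Set (G ⧸ (powMonoidHom n : G →* G).range)).Finite) :
    Finite (G ⧸ (powMonoidHom n : G →* G).range) := by
  have : Group.FG (G ⧸ (powMonoidHom n : G →* G).range) := by
    rw [Group.fg_iff]
    refine ⟨_, ?_, hfin⟩
    rw [← QuotientGroup.coe_mk', ← MonoidHom.map_closure, hS, ← MonoidHom.range_eq_map,
      QuotientGroup.range_mk']
  refine finite_of_fg_isMulTorsion _ fun x => ?_
  obtain ⟨x, rfl⟩ := QuotientGroup.mk_surjective x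
  refine isOfFinOrder_iff_pow_eq_one.mpr ⟨n, hn, ?_⟩
  rw [← QuotientGroup.mk_pow, QuotientGroup.eq_one_iff]
  exact ⟨x, rfl⟩

theorem finite_range_mk'_comp_unitsMap {R K : Type*} [CommRing R] [Field K] [Algebra R K]
    {n : ℕ} (hn : 0 < n) (c : R)
    [Finite (R ⧸ Ideal.span {c})] (hpow : ∀ t : R, ∃ x : R, x ^ n = 1 + c * t) :
    Finite ((QuotientGroup.mk' (powMonoidHom n : Kˣ →* Kˣ).range).comp
      (Units.map (algebraMap R K : R →* K))).range := by
  refine MonoidHom.finite_range_of_ker_le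
    (Units.map (Ideal.Quotient.mk (Ideal.span {c}) : R →* R ⧸ Ideal.span {c})) _ fun u hu => ?_
  obtain ⟨t, ht⟩ : c ∣ (u : R) - 1 := by
    rw [← Ideal.mem_span_singleton, ← Ideal.Quotient.eq]
    simpa [Units.ext_iff] using hu
  obtain ⟨x, hx⟩ := hpow t
  have hxu : algebraMap R K x ^ n = algebraMap R K u := by
    rw [← map_pow, hx, ← ht, add_sub_cancel]
  have hx0 : algebraMap R K x ≠ 0 :=
    ne_zero_pow hn.ne' (hxu ▸ (Units.map (algebraMap R K : R →* K) u).ne_zero)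
  rw [MonoidHom.mem_ker, MonoidHom.comp_apply, QuotientGroup.mk'_apply, QuotientGroup.eq_one_iff]
  exact ⟨Units.mk0 _ hx0, Units.ext hxu⟩

namespace IsFractionRing

variable {R K : Type*} [CommRing R] [IsDomain R] [Field K] [Algebra R K] [IsFractionRing R K]

theorem closure_range_units_union_primes_eq_top [UniqueFactorizationMonoid R] {P : Set R}
    (hP : ∀ q : R, Prime q → ∃ q' ∈ P, Associated q q') :
    Subgroup.closure (Set.range (Units.map (algebraMap R K : R →* K)) ∪
      {x : Kˣ | ∃ q ∈ P, algebraMap R K q = x}) = ⊤ := by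
  set H := Subgroup.closure (Set.range (Units.map (algebraMap R K : R →* K)) ∪
      {x : Kˣ | ∃ q ∈ P, algebraMap R K q = x})
  have hunit (u : Rˣ) : Units.map (algebraMap R K : R →* K) u ∈ H :=
    Subgroup.subset_closure (Or.inl ⟨u, rfl⟩)
  have hne {r : R} (hr : r ≠ 0) : algebraMap R K r ≠ 0 :=
    (map_ne_zero_iff _ (IsFractionRing.injective R K)).mpr hr
  have hmem (r : R) (hr : r ≠ 0) : ∃ x ∈ H, (x : K) = algebraMap R K r := by
    induction r using UniqueFactorizationMonoid.induction_on_prime with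
    | h₁ => exact absurd rfl hr
    | h₂ u hu => exact ⟨_, hunit hu.unit, rfl⟩
    | h₃ a q ha hq ih =>
      obtain ⟨x, hx, hxa⟩ := ih ha
      obtain ⟨q', hq', u, rfl⟩ := hP q hq
      have hq'0 : q * u ≠ 0 := mul_ne_zero hq.ne_zero u.ne_zero
      refine ⟨Units.mk0 _ (hne hq'0) * Units.map _ u⁻¹ * x,
        mul_mem (mul_mem (Subgroup.subset_closure (Or.inr ⟨_, hq', rfl⟩)) (hunit _)) hx, ?_⟩
      simp only [Units.val_mul, Units.val_mk0, Units.coe_map, MonoidHom.coe_coe, hxa]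
      rw [← map_mul, ← map_mul, Units.mul_inv_cancel_right]
  refine eq_top_iff.mpr fun x _ => ?_
  obtain ⟨r, s, hs, hx⟩ := IsFractionRing.div_surjective (A := R) (x : K)
  have hr : r ≠ 0 := by
    rintro rfl
    exact x.ne_zero (by simpa using hx.symm)
  obtain ⟨y, hy, hyr⟩ := hmem r hr
  obtain ⟨z, hz, hzs⟩ := hmem s (nonZeroDivisors.ne_zero hs)
  convert mul_mem hy (inv_mem hz)
  ext
  simp [← hx, hyr, hzs, div_eq_mul_inv]

theorem finite_quotient_range_powMonoidHom [IsPrincipalIdealRing R]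
    (hprimes : {P : Ideal R | P.IsPrime}.Finite) {n : ℕ} (hn : 0 < n) (c : R)
    [Finite (R ⧸ Ideal.span {c})] (hpow : ∀ t : R, ∃ x : R, x ^ n = 1 + c * t) :
    Finite (Kˣ ⧸ (powMonoidHom n : Kˣ →* Kˣ).range) := by
  let P : Set R :=
    (fun I : Ideal R => Submodule.IsPrincipal.generator I) '' {I : Ideal R | I.IsPrime}
  have hP (q : R) (hq : Prime q) : ∃ q' ∈ P, Associated q q' := by
    refine ⟨_, ⟨_, (Ideal.span_singleton_prime hq.ne_zero).mpr hq, rfl⟩, ?_⟩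
    exact Ideal.span_singleton_eq_span_singleton.mp (Ideal.span_singleton_generator _).symm
  have hPfin : {x : Kˣ | ∃ q ∈ P, algebraMap R K q = x}.Finite :=
    ((hprimes.image _).image (algebraMap R K)).preimage (f := Units.val)
      Units.val_injective.injOn
  refine CommGroup.finite_quotient_range_powMonoidHom hn
    (closure_range_units_union_primes_eq_top hP) ?_
  rw [Set.image_union]
  refine .union ?_ (hPfin.image _)
  rw [← Set.range_comp]
  exact Set.finite_coe_iff.mp (finite_range_mk'_comp_unitsMap hn c hpow)

end IsFractionRing

namespace PadicInt

variable {p : ℕ} [Fact p.Prime]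

instance : Ring.HasFiniteQuotients ℤ_[p] where
  finiteQuotient {I} hI := by
    obtain ⟨k, rfl⟩ := ideal_eq_span_pow_p hI
    rw [← ker_toZModPow]
    exact Finite.of_injective _ (RingHom.kerLift_injective (toZModPow k))

theorem isAdicComplete_span_natCast (R : Type) [CommRing R] [Algebra ℤ_[p] R]
    [Module.Finite ℤ_[p] R] : IsAdicComplete (Ideal.span {(p : R)}) R := by
  have := IsAdicComplete.of_finite (IsLocalRing.maximalIdeal ℤ_[p]) R
  rw [← IsAdicComplete.map_algebraMap_iff (S := R)] at this
  simpa [maximalIdeal_eq_span_p, Ideal.map_span] using this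

variable {R : Type*} [CommRing R] [IsDomain R] [Algebra ℤ_[p] R]

theorem natCast_mem_of_isPrime [Algebra.IsIntegral ℤ_[p] R] {P : Ideal R} [P.IsPrime]
    (hP : P ≠ ⊥) : (p : R) ∈ P := by
  have hmax : (P.under ℤ_[p]).IsMaximal :=
    Ring.DimensionLEOne.maximalOfPrime (Ideal.under_ne_bot ℤ_[p] hP) inferInstance
  have hp : (p : ℤ_[p]) ∈ P.under ℤ_[p] := by
    rw [IsLocalRing.eq_maximalIdeal hmax, maximalIdeal_eq_span_p]
    exact Ideal.mem_span_singleton_self _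
  simpa using hp

theorem finite_setOf_isPrime [Module.Finite ℤ_[p] R] [FaithfulSMul ℤ_[p] R] :
    {P : Ideal R | P.IsPrime}.Finite := by
  have := Ring.HasFiniteQuotients.of_module_finite ℤ_[p] R
  have := charZero_of_injective_algebraMap (FaithfulSMul.algebraMap_injective ℤ_[p] R)
  have hp : (p : R) ≠ 0 := Nat.cast_ne_zero.mpr (Fact.out : p.Prime).ne_zero
  refine ((Ring.HasFiniteQuotients.finite_setOfPred_mem _ hp).insert ⊥).subset fun P hP => ?_
  have : P.IsPrime := hP
  rcases eq_or_ne P ⊥ with hPb | hPb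
  · exact Or.inl hPb
  · exact Or.inr (natCast_mem_of_isPrime hPb)

theorem finite_quotient_range_powMonoidHom (K : Type*) [Field K] (R : Type) [CommRing R]
    [IsDedekindDomain R] [Algebra ℤ_[p] R] [Module.Finite ℤ_[p] R] [FaithfulSMul ℤ_[p] R]
    [Algebra R K] [IsFractionRing R K] {n : ℕ} (hn : 0 < n) :
    Finite (Kˣ ⧸ (powMonoidHom n : Kˣ →* Kˣ).range) := by
  have hprimes := finite_setOf_isPrime (p := p) (R := R)
  have := IsPrincipalIdealRing.of_finite_primes hprimes
  have := Ring.HasFiniteQuotients.of_module_finite ℤ_[p] R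
  have := charZero_of_injective_algebraMap (FaithfulSMul.algebraMap_injective ℤ_[p] R)
  have : Finite (R ⧸ Ideal.span {(n : R) ^ 2 * (p : R) ^ 2}) :=
    Ring.HasFiniteQuotients.finiteQuotient (by simp [hn.ne', (Fact.out : p.Prime).ne_zero])
  have := isAdicComplete_span_natCast (p := p) R
  exact IsFractionRing.finite_quotient_range_powMonoidHom hprimes hn _
    (IsAdicComplete.exists_pow_eq_one_add (Ideal.mem_span_singleton_self (p : R)) n)

end PadicInt

/-- for a finite extension `K` of `ℚ_p` and every positive integer `n`,
the quotient group `K^×/(K^×)ⁿ` is finite. -/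
theorem units_quotient_pow_finite (p : ℕ) [Fact p.Prime] (K : Type) [Field K]
    [Algebra ℚ_[p] K] [FiniteDimensional ℚ_[p] K] (n : ℕ) (hn : 0 < n) :
    Finite (Kˣ ⧸ (powMonoidHom n : Kˣ →* Kˣ).range) := by
  let : Algebra ℤ_[p] K := ((algebraMap ℚ_[p] K).comp (algebraMap ℤ_[p] ℚ_[p])).toAlgebra
  have : IsScalarTower ℤ_[p] ℚ_[p] K := .of_algebraMap_eq fun _ => rfl
  have : FaithfulSMul ℤ_[p] K := (faithfulSMul_iff_algebraMap_injective _ _).mpr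
    ((algebraMap ℚ_[p] K).injective.comp (IsFractionRing.injective ℤ_[p] ℚ_[p]))
  have := integralClosure.isDedekindDomain ℤ_[p] ℚ_[p] K
  have : IsFractionRing (integralClosure ℤ_[p] K) K :=
    integralClosure.isFractionRing_of_finite_extension ℚ_[p] K
  have := IsIntegralClosure.finite ℤ_[p] ℚ_[p] K (integralClosure ℤ_[p] K)
  exact PadicInt.finite_quotient_range_powMonoidHom (p := p) K (integralClosure ℤ_[p] K) hn
end
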